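/- Work on the circle 𝕋 = ℝ/ℤ with quotient metric d and Lebesgue (Haar) measure λ. Let b ∈ (0,1), f_0(x) = 3x mod 1, f_1(x) = 3x + b mod 1, and p ∈ [0,1]. Fix k ≥ 2, let Δ_r^k = {(x_1,…,x_k) ∈ 𝕋^k : max_{i=2,…,k} d(x_1, x_i) < r}, and for ξ ∈ {0,1}^k let f_ξ = f_{ξ_1} × ⋯ × f_{ξ_k} act coordinatewise and w(ξ) = p^{#{i : ξ_i = 0}}·(1−p)^{#{i : ξ_i = 1}}. Then lim_{r→0⁺} [ Σ_{ξ ∈ {0,1}^k} w(ξ)·λ^{⊗k}( Δ_r^k ∩ f_ξ^{-1}(Δ_r^k) ) ] / λ^{⊗k}( Δ_r^k ) = (p^k + (1−p)^k)/3^{k−1}. (Hence the dynamical extremal index of the annealed random system is θ_k = 1 − q_0^{(unp)}·(p^k + (1−p)^k) with q_0^{(unp)} = 3^{−(k−1)}.) -/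

import Mathlib

open MeasureTheory Set Filter Metric Topology
open scoped ENNReal

/-! For small `r` only the constant words contribute. If `ξ i ≠ ξ 0`, two points within `r` of
each other are sent by `x ↦ 3x` and `x ↦ 3x + b` to points at distance at least `‖b‖ - 3r > r`.
For a constant word the translations cancel, and since `x ↦ 3x` triples the distance on balls of
radius `< 1/6`, the condition becomes `x i - x 0 ∈ ball 0 (r/3)` for every `i`. As `Δ_r` is
itself `x i - x 0 ∈ ball 0 r`, Fubini turns both volumes into products of ball volumes,
`(2r/3)^(k-1)` against `(2r)^(k-1)`, and the ratio is constant for small `r`. -/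

theorem UnitAddCircle.norm_nsmul_eq_mul_norm {m : ℕ} {u : UnitAddCircle}
    (hu : ‖u‖ ≤ 1 / (2 * m)) : ‖m • u‖ = m * ‖u‖ := by
  induction u using QuotientAddGroup.induction_on with
  | H s =>
    set t := s - round s
    have hts : (t : UnitAddCircle) = s := by simp [t]
    have ht : ‖(t : UnitAddCircle)‖ = |t| := by rw [UnitAddCircle.norm_eq]; simp [t]
    rw [← hts, ht] at hu
    rw [← hts]
    have hmt : |(m : ℝ) * t| ≤ |(1 : ℝ)| / 2 := by
      rw [abs_mul, Nat.abs_cast, abs_one]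
      rcases m.eq_zero_or_pos with rfl | hm
      · simp
      · calc (m : ℝ) * |t| ≤ m * (1 / (2 * m)) := by gcongr
          _ = 1 / 2 := by field_simp
    rw [← AddCircle.coe_nsmul, nsmul_eq_mul, (AddCircle.norm_coe_eq_abs_iff _ one_ne_zero).2 hmt,
      abs_mul, Nat.abs_cast, ht]

theorem UnitAddCircle.setOf_norm_lt_and_norm_nsmul_lt {m : ℕ} (hm : 0 < m) {r : ℝ}
    (hr : r ≤ 1 / (2 * m)) : {u : UnitAddCircle | ‖u‖ < r ∧ ‖m • u‖ < r} = ball 0 (r / m) := by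
  have hm' : (1 : ℝ) ≤ m := Nat.one_le_cast.2 hm
  ext u
  simp only [mem_ofPred_eq, mem_ball_zero_iff, lt_div_iff₀ (by positivity : (0 : ℝ) < m)]
  constructor
  · rintro ⟨hu, hmu⟩
    rwa [UnitAddCircle.norm_nsmul_eq_mul_norm (hu.le.trans hr), mul_comm] at hmu
  · intro hu
    exact ⟨by nlinarith [norm_nonneg u], norm_nsmul_le.trans_lt (by linarith)⟩

theorem UnitAddCircle.volume_ball (x : UnitAddCircle) {r : ℝ} (hr : r ≤ 1 / 2) :
    volume (ball x r) = ENNReal.ofReal (2 * r) := by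
  rw [← measure_congr AddCircle.closedBall_ae_eq_ball, AddCircle.volume_closedBall,
    min_eq_right (by linarith)]

theorem setOf_norm_lt_and_norm_nsmul_add_lt_eq_empty {E : Type*} [SeminormedAddCommGroup E]
    {m : ℕ} {r : ℝ} {d : E} (hd : (m + 1) * r ≤ ‖d‖) :
    {u : E | ‖u‖ < r ∧ ‖m • u + d‖ < r} = ∅ := by
  refine eq_empty_of_forall_notMem fun u ⟨hu, hmu⟩ => hd.not_gt ?_
  calc ‖d‖ = ‖(m • u + d) - m • u‖ := by rw [add_sub_cancel_left]
    _ ≤ ‖m • u + d‖ + m * ‖u‖ := (norm_sub_le _ _).trans (by gcongr; exact norm_nsmul_le)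
    _ < r + m * r := add_lt_add_of_lt_of_le hmu (by gcongr)
    _ = (m + 1) * r := by ring

/-- Fubini in the coordinates `(x 0, x 1 - x 0, …, x n - x 0)`. -/
theorem measure_pi_setOf_sub_mem {G : Type*} [MeasurableSpace G] [AddGroup G]
    [MeasurableAdd G] [MeasurableSub₂ G] (μ : Measure G) [SigmaFinite μ]
    [μ.IsAddRightInvariant] {n : ℕ} {T : Fin (n + 1) → Set G} (hT : ∀ i, MeasurableSet (T i)) :
    Measure.pi (fun _ => μ) {x | ∀ i ≠ 0, x i - x 0 ∈ T i}
      = μ univ * ∏ j : Fin n, μ (T j.succ) := by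
  set B : Set (G × (Fin n → G)) := {q | ∀ j, q.2 j - q.1 ∈ T j.succ}
  have hB : MeasurableSet B := by
    simp only [B, ofPred_forall]
    exact .iInter fun j => (hT j.succ).preimage (by fun_prop)
  have hsection (y : G) :
      Measure.pi (fun _ => μ) (Prod.mk y ⁻¹' B) = ∏ j : Fin n, μ (T j.succ) := by
    have : Prod.mk y ⁻¹' B = univ.pi fun j => (· + -y) ⁻¹' T j.succ := by
      ext z; simp [B, sub_eq_add_neg]
    rw [this, Measure.pi_pi]
    exact Finset.prod_congr rfl fun j _ => measure_preimage_add_right μ (-y) _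
  have hset : {x : Fin (n + 1) → G | ∀ i ≠ 0, x i - x 0 ∈ T i}
      = MeasurableEquiv.piFinSuccAbove (fun _ => G) 0 ⁻¹' B := by
    ext x
    simp [B, Fin.forall_fin_succ, MeasurableEquiv.piFinSuccAbove_apply, Fin.tail]
  rw [hset, (measurePreserving_piFinSuccAbove (fun _ => μ) 0).measure_preimage
    hB.nullMeasurableSet, Measure.prod_apply hB]
  simp only [hsection, lintegral_const, mul_comm]

/-- The neighbourhood `Δ_r^{n+1}` of the diagonal, with coordinates indexed from `0`. -/
def diagonalNhd (α : Type*) [PseudoMetricSpace α] (n : ℕ) (r : ℝ) : Set (Fin (n + 1) → α) :=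
  {x | ∀ i ≠ 0, dist (x 0) (x i) < r}

theorem diagonalNhd_eq_setOf_sub_mem {E : Type*} [SeminormedAddCommGroup E] (n : ℕ) (r : ℝ) :
    diagonalNhd E n r = {x | ∀ i ≠ 0, x i - x 0 ∈ ball 0 r} := by
  simp only [diagonalNhd, mem_ball_zero_iff, dist_eq_norm_sub']

theorem diagonalNhd_inter_preimage_eq {E ι : Type*} [SeminormedAddCommGroup E] (m : ℕ)
    (c : ι → E) {n : ℕ} (r : ℝ) (ξ : Fin (n + 1) → ι) :
    diagonalNhd E n r ∩ (fun x i => m • x i + c (ξ i)) ⁻¹' diagonalNhd E n r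
      = {x | ∀ i ≠ 0, x i - x 0 ∈ {u | ‖u‖ < r ∧ ‖m • u + (c (ξ i) - c (ξ 0))‖ < r}} := by
  have (x : Fin (n + 1) → E) (i) : m • x i + c (ξ i) - (m • x 0 + c (ξ 0))
      = m • (x i - x 0) + (c (ξ i) - c (ξ 0)) := by
    rw [nsmul_sub]; abel
  ext x
  simp only [diagonalNhd_eq_setOf_sub_mem, mem_inter_iff, mem_preimage, mem_ofPred_eq,
    mem_ball_zero_iff, this, ← forall_and]

theorem volume_diagonalNhd (n : ℕ) {r : ℝ} (hr : r ≤ 1 / 2) :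
    volume (diagonalNhd UnitAddCircle n r) = ENNReal.ofReal (2 * r) ^ n := by
  rw [diagonalNhd_eq_setOf_sub_mem, volume_pi,
    measure_pi_setOf_sub_mem _ fun _ => measurableSet_ball]
  simp [UnitAddCircle.volume_ball _ hr]

theorem volume_diagonalNhd_inter_preimage {ι : Type*} [DecidableEq ι] {m : ℕ} (hm : 0 < m)
    (c : ι → UnitAddCircle) {n : ℕ} {r : ℝ} (hr : r ≤ 1 / (2 * m))
    (hsep : ∀ a b, a ≠ b → (m + 1) * r ≤ ‖c a - c b‖) (ξ : Fin (n + 1) → ι) :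
    volume (diagonalNhd UnitAddCircle n r ∩
        (fun x i => m • x i + c (ξ i)) ⁻¹' diagonalNhd UnitAddCircle n r)
      = if ∀ i, ξ i = ξ 0 then volume (diagonalNhd UnitAddCircle n r) / (m : ℝ≥0∞) ^ n
        else 0 := by
  have hm' : (1 : ℝ) ≤ m := Nat.one_le_cast.2 hm
  have hr' : r ≤ 1 / 2 := hr.trans (by gcongr; linarith)
  rw [diagonalNhd_inter_preimage_eq, volume_diagonalNhd n hr', volume_pi,
    measure_pi_setOf_sub_mem _ fun _ => by measurability, UnitAddCircle.measure_univ, one_mul]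
  split_ifs with hξ
  · have hrm : r / m ≤ 1 / 2 := by
      rw [le_div_iff₀ (by positivity)] at hr
      rw [div_le_iff₀ (by positivity)]
      nlinarith
    have hball (j : Fin n) :
        {u : UnitAddCircle | ‖u‖ < r ∧ ‖m • u + (c (ξ j.succ) - c (ξ 0))‖ < r} = ball 0 (r / m) := by
      simp only [hξ j.succ, sub_self, add_zero, UnitAddCircle.setOf_norm_lt_and_norm_nsmul_lt hm hr]
    simp only [hball, Finset.prod_const, Finset.card_univ, Fintype.card_fin,
      UnitAddCircle.volume_ball 0 hrm]
    rw [← mul_div_assoc, ENNReal.ofReal_div_of_pos (by positivity), ENNReal.ofReal_natCast,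
      div_eq_mul_inv, div_eq_mul_inv, mul_pow, ENNReal.inv_pow]
  · obtain ⟨i, hi⟩ := not_forall.1 hξ
    obtain ⟨j, rfl⟩ := Fin.exists_succ_eq.2 (show i ≠ 0 by rintro rfl; exact hi rfl)
    refine Finset.prod_eq_zero (Finset.mem_univ j) ?_
    rw [setOf_norm_lt_and_norm_nsmul_add_lt_eq_empty (hsep _ _ hi), measure_empty]

theorem sum_mul_ite_const_word {ι R : Type*} [Fintype ι] [DecidableEq ι]
    [NonUnitalNonAssocSemiring R] {n : ℕ} (a : (Fin (n + 1) → ι) → R) (A : R) :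
    ∑ ξ, a ξ * (if ∀ i, ξ i = ξ 0 then A else 0) = (∑ s, a fun _ => s) * A := by
  simp_rw [mul_ite, mul_zero, Finset.sum_ite, Finset.sum_const_zero, add_zero, Finset.sum_mul]
  have : Finset.univ.filter (fun ξ : Fin (n + 1) → ι => ∀ i, ξ i = ξ 0)
      = Finset.univ.map ⟨fun s _ => s, Function.const_injective⟩ := by
    ext ξ
    simp only [Finset.mem_filter, Finset.mem_univ, true_and, Finset.mem_map, funext_iff]
    exact ⟨fun h => ⟨ξ 0, fun i => (h i).symm⟩, fun ⟨s, hs⟩ i => (hs i).symm.trans (hs 0)⟩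
  rw [this, Finset.sum_map]
  rfl

theorem sum_mul_volume_diagonalNhd_inter_preimage_div {ι : Type*} [Fintype ι] [DecidableEq ι]
    {m : ℕ} (hm : 0 < m) (c : ι → UnitAddCircle) {n : ℕ} {r : ℝ} (hr0 : 0 < r)
    (hr : r ≤ 1 / (2 * m)) (hsep : ∀ a b, a ≠ b → (m + 1) * r ≤ ‖c a - c b‖)
    (a : (Fin (n + 1) → ι) → ℝ≥0∞) :
    (∑ ξ, a ξ * volume (diagonalNhd UnitAddCircle n r ∩
        (fun x i => m • x i + c (ξ i)) ⁻¹' diagonalNhd UnitAddCircle n r))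
        / volume (diagonalNhd UnitAddCircle n r)
      = (∑ s, a fun _ => s) / (m : ℝ≥0∞) ^ n := by
  have hm' : (1 : ℝ) ≤ m := Nat.one_le_cast.2 hm
  have hV := volume_diagonalNhd n (show r ≤ 1 / 2 from hr.trans (by gcongr; linarith))
  have hV0 : volume (diagonalNhd UnitAddCircle n r) ≠ 0 := by
    rw [hV]; exact pow_ne_zero _ (ENNReal.ofReal_pos.2 (by linarith)).ne'
  have hVtop : volume (diagonalNhd UnitAddCircle n r) ≠ ⊤ := by
    rw [hV]; exact ENNReal.pow_ne_top ENNReal.ofReal_ne_top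
  simp only [volume_diagonalNhd_inter_preimage hm c hr hsep, sum_mul_ite_const_word]
  rw [← mul_div_assoc, ENNReal.div_right_comm, ENNReal.mul_div_cancel_right hV0 hVtop]

/-- Dynamical extremal index of the annealed random system choosing `f₀(x) = 3x mod 1`
with probability `p` and `f₁(x) = 3x + b mod 1` with probability `1 − p` on each
coordinate: with `Δ_r^k` the `r`-neighborhood of the diagonal in `𝕋^k`, `f_ξ` the
coordinatewise action of the word `ξ ∈ {0,1}^k` and `w(ξ)` its Bernoulli weight,
`lim_{r→0⁺} [Σ_ξ w(ξ)·λ^{⊗k}(Δ_r^k ∩ f_ξ⁻¹ Δ_r^k)]/λ^{⊗k}(Δ_r^k)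
  = (p^k + (1−p)^k)/3^{k−1}`. -/
theorem stmt14 (b : ℝ) (hb : b ∈ Set.Ioo (0:ℝ) 1) (p : ℝ) (hp : p ∈ Set.Icc (0:ℝ) 1)
    (f : Bool → UnitAddCircle → UnitAddCircle)
    (hf₀ : ∀ x, f false x = x + x + x)
    (hf₁ : ∀ x, f true x = x + x + x + (b : UnitAddCircle))
    (k : ℕ) (hk : 2 ≤ k)
    (Δ : ℝ → Set (Fin k → UnitAddCircle))
    (hΔ : ∀ r : ℝ, Δ r
      = {x | ∀ i : Fin k, i ≠ ⟨0, by omega⟩ → dist (x ⟨0, by omega⟩) (x i) < r})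
    (w : (Fin k → Bool) → ℝ)
    (hw : ∀ ξ, w ξ = p ^ (Finset.univ.filter fun i => ξ i = false).card
        * (1 - p) ^ (Finset.univ.filter fun i => ξ i = true).card) :
    Tendsto (fun r : ℝ =>
        (∑ ξ : Fin k → Bool,
          ENNReal.ofReal (w ξ) * volume (Δ r ∩ (fun x i => f (ξ i) (x i)) ⁻¹' Δ r))
          / volume (Δ r))
      (nhdsWithin 0 (Set.Ioi 0))
      (nhds (ENNReal.ofReal ((p ^ k + (1 - p) ^ k) / 3 ^ (k - 1)))) := by
  obtain ⟨n, rfl⟩ : ∃ n, k = n + 1 := ⟨k - 1, by omega⟩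
  obtain rfl : Δ = diagonalNhd UnitAddCircle n := funext fun r => by simp [hΔ, diagonalNhd]
  set c : Bool → UnitAddCircle := fun s => cond s (b : UnitAddCircle) 0
  have hf (s : Bool) (x : UnitAddCircle) : f s x = (3 : ℕ) • x + c s := by
    cases s <;> simp [c, hf₀, hf₁, three_nsmul, add_assoc]
  have hb' : 0 < ‖(b : UnitAddCircle)‖ :=
    norm_pos_iff.2 fun h => hb.1.ne' ((AddCircle.coe_eq_zero_iff_of_mem_Ico ⟨hb.1.le, hb.2⟩).1 h)
  have hsep {r : ℝ} (hr : r ≤ ‖(b : UnitAddCircle)‖ / 4) (s t : Bool) (hst : s ≠ t) :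
      ((3 : ℕ) + 1 : ℝ) * r ≤ ‖c s - c t‖ := by
    cases s <;> cases t <;> simp_all [c] <;> linarith
  have hweights : ∑ s : Bool, ENNReal.ofReal (w fun _ => s)
      = ENNReal.ofReal (p ^ (n + 1)) + ENNReal.ofReal ((1 - p) ^ (n + 1)) := by
    simp [hw, add_comm]
  have hsmall : ∀ᶠ r in 𝓝[>] (0 : ℝ), 0 < r ∧ r ≤ 1 / 6 ∧ r ≤ ‖(b : UnitAddCircle)‖ / 4 :=
    eventually_mem_nhdsWithin.and <| nhdsWithin_le_nhds <|
      (eventually_le_nhds (by norm_num)).and (eventually_le_nhds (by positivity))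
  rw [Nat.add_sub_cancel, ENNReal.ofReal_div_of_pos (by positivity),
    ENNReal.ofReal_add (pow_nonneg hp.1 _) (pow_nonneg (sub_nonneg.2 hp.2) _),
    ENNReal.ofReal_pow zero_le_three, ENNReal.ofReal_ofNat]
  refine tendsto_const_nhds.congr' ?_
  filter_upwards [hsmall] with r ⟨hr0, hr6, hrb⟩
  simp only [hf]
  rw [sum_mul_volume_diagonalNhd_inter_preimage_div (by norm_num) c hr0 (by norm_num; linarith)
    (hsep hrb), hweights, Nat.cast_ofNat]
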